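/- Let H be a finite-dimensional real inner product space, B a set of unit-norm atoms that is centrally symmetric and spanning, k > 1 an integer, A the k-simple subset relative to B, and suppose (H, A, ‖·‖_B) is a compressed sensing space with bound L > 0. Let Φ : H → ℝ^m be a linear map having the (k, α, β)-generalized-weaken-RIP for distortions α, β > 0 with α ≤ β, and suppose there exists ρ with √((β² − α²)/(α²(k−1))) < ρ < 1/(4L). Then every x♮ ∈ A is exactly recovered from its noiseless measurements: any minimizer x* of ‖x‖_B subject to Φx = Φx♮ satisfies x* = x♮. -/

import Mathlib

open scoped BigOperators RealInnerProductSpace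

/-- The atom norm induced by a set of atoms `B`. -/
noncomputable def atomNorm {H : Type*} [AddCommGroup H] [Module ℝ H] (B : Set H) (x : H) : ℝ :=
  sInf { r : ℝ | ∃ (S : Finset H) (σ : H → ℝ), ↑S ⊆ B ∧ (∀ b ∈ S, 0 ≤ σ b) ∧
    x = ∑ b ∈ S, σ b • b ∧ r = ∑ b ∈ S, σ b }

/-- The `k`-simple subset relative to a set of atoms `B`. -/
def simpleSet {H : Type*} [AddCommGroup H] [Module ℝ H] (B : Set H) (k : ℕ) : Set H :=
  { x | ∃ (σ : Fin k → ℝ) (b : Fin k → H),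
      (∀ i, 0 ≤ σ i) ∧ (∀ i, b i ∈ B) ∧ x = ∑ i, σ i • b i }

/-- `B` spans `H` via finite nonnegative combinations. -/
def Spans {H : Type*} [AddCommGroup H] [Module ℝ H] (B : Set H) : Prop :=
  ∀ x : H, ∃ (S : Finset H) (σ : H → ℝ), ↑S ⊆ B ∧ (∀ b ∈ S, 0 ≤ σ b) ∧
    x = ∑ b ∈ S, σ b • b

/-- `(H, A, ‖·‖_B)` is a compressed sensing space with bound `L`. -/
def IsCSSpace {H : Type*} [NormedAddCommGroup H] [InnerProductSpace ℝ H]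
    (B A : Set H) (L : ℝ) : Prop :=
  (0 : H) ∈ A ∧ ∀ a ∈ A, ∀ v : H, ∃ z₁ z₂ : H, v = z₁ + z₂ ∧
    atomNorm B (a + z₁) = atomNorm B a + atomNorm B z₁ ∧ atomNorm B z₂ ≤ L * ‖v‖

/-- The dual norm of the atom norm. -/
noncomputable def dualNorm {H : Type*} [NormedAddCommGroup H] [InnerProductSpace ℝ H]
    (B : Set H) (y : H) : ℝ :=
  sSup { r : ℝ | ∃ x : H, atomNorm B x ≤ 1 ∧ r = ⟪x, y⟫ }


/-!
Let `v = x* - x♮`, so `Φ v = 0`. Minimality of `x*` together with the compressed-sensing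
decomposition of `v` at `x♮` gives `‖v‖_B ≤ 2L‖v‖`. Conversely, write `v = ∑ σ_b b` with
`σ ≥ 0`, `∑ σ_b = 1`, and average the lower RIP inequality `‖Φ u‖² ≥ α² ‖u‖²` over the sums
`u = b₁ + ⋯ + b_k` of `k` atoms drawn independently with weights `σ`: the average of the quadratic
form `‖Φ u‖² - α² ‖u‖²` is `k D - k (k - 1) α² ‖v‖²` with `D ≤ β² - α²`, so
`(k - 1) α² ‖v‖² ≤ β² - α²`. By homogeneity `‖v‖ ≤ ρ ‖v‖_B`, hence `‖v‖_B ≤ 2Lρ ‖v‖_B` with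
`2Lρ < 1/2`, and `v = 0`.
-/

open Finset

section AtomNorm

variable {H : Type*} [AddCommGroup H] [Module ℝ H] {B : Set H}

/-- `atomNorm B x` is, by definition, `sInf (atomCosts B x)`. -/
def atomCosts (B : Set H) (x : H) : Set ℝ :=
  { r | ∃ (S : Finset H) (σ : H → ℝ), ↑S ⊆ B ∧ (∀ b ∈ S, 0 ≤ σ b) ∧
    x = ∑ b ∈ S, σ b • b ∧ r = ∑ b ∈ S, σ b }

lemma nonneg_of_mem_atomCosts {x : H} {r : ℝ} (hr : r ∈ atomCosts B x) : 0 ≤ r := by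
  obtain ⟨S, σ, -, hσ, -, rfl⟩ := hr
  exact sum_nonneg hσ

lemma bddBelow_atomCosts (x : H) : BddBelow (atomCosts B x) :=
  ⟨0, fun _ ↦ nonneg_of_mem_atomCosts⟩

lemma atomCosts_nonempty (hB : Spans B) (x : H) : (atomCosts B x).Nonempty := by
  obtain ⟨S, σ, hS, hσ, hx⟩ := hB x
  exact ⟨_, S, σ, hS, hσ, hx, rfl⟩

lemma atomNorm_nonneg (x : H) : 0 ≤ atomNorm B x :=
  Real.sInf_nonneg fun _ ↦ nonneg_of_mem_atomCosts

lemma atomNorm_le_of_mem_atomCosts {x : H} {r : ℝ} (hr : r ∈ atomCosts B x) :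
    atomNorm B x ≤ r :=
  csInf_le (bddBelow_atomCosts x) hr

lemma add_mem_atomCosts {x y : H} {r s : ℝ} (hr : r ∈ atomCosts B x)
    (hs : s ∈ atomCosts B y) : r + s ∈ atomCosts B (x + y) := by
  classical
  obtain ⟨S, σ, hS, hσ, rfl, rfl⟩ := hr
  obtain ⟨T, τ, hT, hτ, rfl, rfl⟩ := hs
  refine ⟨S ∪ T, fun b ↦ (if b ∈ S then σ b else 0) + (if b ∈ T then τ b else 0),
    by simpa using Set.union_subset hS hT, fun b _ ↦ ?_, ?_, ?_⟩
  · exact add_nonneg (by split_ifs with h; exacts [hσ b h, le_rfl])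
      (by split_ifs with h; exacts [hτ b h, le_rfl])
  · simp [add_smul, ite_smul, sum_add_distrib, sum_ite_mem, union_inter_cancel_left,
      union_inter_cancel_right]
  · simp [sum_add_distrib, sum_ite_mem, union_inter_cancel_left, union_inter_cancel_right]

lemma mem_atomCosts_neg (hBsym : ∀ b ∈ B, -b ∈ B) {x : H} {r : ℝ}
    (hr : r ∈ atomCosts B x) : r ∈ atomCosts B (-x) := by
  obtain ⟨S, σ, hS, hσ, rfl, rfl⟩ := hr
  refine ⟨S.map (Equiv.neg H).toEmbedding, fun b ↦ σ (-b), ?_, ?_, ?_, ?_⟩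
  · intro b hb
    simp only [coe_map, Set.mem_image, mem_coe] at hb
    obtain ⟨a, ha, rfl⟩ := hb
    exact hBsym a (hS ha)
  · simpa using fun b hb ↦ hσ (-b) hb
  · simp [sum_map, ← sum_neg_distrib]
  · simp [sum_map]

lemma atomNorm_add_le (hB : Spans B) (x y : H) :
    atomNorm B (x + y) ≤ atomNorm B x + atomNorm B y := by
  have h₁ : ∀ s ∈ atomCosts B y, atomNorm B (x + y) - s ≤ atomNorm B x :=
    fun s hs ↦ le_csInf (atomCosts_nonempty hB x) fun r hr ↦ by
      linarith [atomNorm_le_of_mem_atomCosts (add_mem_atomCosts hr hs)]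
  have h₂ : atomNorm B (x + y) - atomNorm B x ≤ atomNorm B y :=
    le_csInf (atomCosts_nonempty hB y) fun s hs ↦ by linarith [h₁ s hs]
  linarith

lemma atomNorm_neg_le (hBsym : ∀ b ∈ B, -b ∈ B) (hB : Spans B) (x : H) :
    atomNorm B (-x) ≤ atomNorm B x :=
  le_csInf (atomCosts_nonempty hB x) fun _ hr ↦
    atomNorm_le_of_mem_atomCosts (mem_atomCosts_neg hBsym hr)

end AtomNorm

section TupleAverage

variable {M : Type*} [AddCommMonoid M] {S : Finset M} {σ : M → ℝ}

/-- `weightedTupleSum S σ j f = ∑_{b₁, …, bⱼ ∈ S} σ b₁ ⋯ σ bⱼ * f (b₁ + ⋯ + bⱼ)`. -/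
def weightedTupleSum (S : Finset M) (σ : M → ℝ) : ℕ → (M → ℝ) → ℝ
  | 0, f => f 0
  | j + 1, f => ∑ b ∈ S, σ b * weightedTupleSum S σ j (fun u ↦ f (b + u))

lemma weightedTupleSum_nonneg (hσ : ∀ b ∈ S, 0 ≤ σ b) {j : ℕ} {f : M → ℝ}
    (hf : ∀ g : Fin j → M, (∀ i, g i ∈ S) → 0 ≤ f (∑ i, g i)) :
    0 ≤ weightedTupleSum S σ j f := by
  induction j generalizing f with
  | zero => simpa [weightedTupleSum] using hf Fin.elim0 fun i ↦ i.elim0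
  | succ j ih =>
    refine sum_nonneg fun b hb ↦ mul_nonneg (hσ b hb) (ih fun g hg ↦ ?_)
    simpa [Fin.sum_cons] using hf (Fin.cons b g) (Fin.cases hb hg)

lemma weightedTupleSum_bilinForm [Module ℝ M] (F : LinearMap.BilinForm ℝ M) (hF : F.IsSymm)
    (hσ : ∑ b ∈ S, σ b = 1) {v : M} (hv : ∑ b ∈ S, σ b • b = v) (j : ℕ) (x : M) :
    weightedTupleSum S σ j (fun u ↦ F (x + u) (x + u)) =
      F x x + 2 * j * F x v + j * ∑ b ∈ S, σ b * F b b + j * (j - 1) * F v v := by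
  have hxv : ∀ x, ∑ b ∈ S, σ b * F x b = F x v := fun x ↦ by simp [← hv]
  have hvv : ∑ b ∈ S, σ b * F b v = F v v := by
    rw [← hxv v]
    exact sum_congr rfl fun b _ ↦ by rw [hF.eq]
  induction j generalizing x with
  | zero => simp [weightedTupleSum]
  | succ j ih =>
    set D := ∑ b ∈ S, σ b * F b b
    have hterm : ∀ b,
        σ b * (F (x + b) (x + b) + 2 * j * F (x + b) v + j * D + j * (j - 1) * F v v)
        = (F x x + 2 * j * F x v + j * D + j * (j - 1) * F v v) * σ b + 2 * (σ b * F x b)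
          + σ b * F b b + 2 * j * (σ b * F b v) := fun b ↦ by
      simp only [map_add, LinearMap.add_apply, hF.eq b x]
      ring
    simp only [weightedTupleSum, ← add_assoc, ih, hterm, sum_add_distrib, ← mul_sum,
      hσ, hxv, hvv]
    push_cast
    ring

end TupleAverage

section RIP

variable {H E : Type*} [NormedAddCommGroup H] [InnerProductSpace ℝ H] [NormedAddCommGroup E]
  [InnerProductSpace ℝ E] {B : Set H} {k : ℕ} {α β : ℝ} {Φ : H →ₗ[ℝ] E}

noncomputable def ripDefect (Φ : H →ₗ[ℝ] E) (α : ℝ) : LinearMap.BilinForm ℝ H :=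
  (innerₗ E).compl₁₂ Φ Φ - α ^ 2 • innerₗ H

lemma ripDefect_apply (x y : H) : ripDefect Φ α x y = ⟪Φ x, Φ y⟫ - α ^ 2 * ⟪x, y⟫ := rfl

lemma ripDefect_isSymm : (ripDefect Φ α).IsSymm :=
  ⟨fun x y ↦ by
    rw [ripDefect_apply, ripDefect_apply, real_inner_comm (Φ x), real_inner_comm x]⟩

lemma ripDefect_self (x : H) : ripDefect Φ α x x = ‖Φ x‖ ^ 2 - α ^ 2 * ‖x‖ ^ 2 := by
  rw [ripDefect_apply, real_inner_self_eq_norm_sq, real_inner_self_eq_norm_sq]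

lemma sum_mem_simpleSet {g : Fin k → H} (hg : ∀ i, g i ∈ B) : ∑ i, g i ∈ simpleSet B k :=
  ⟨1, g, fun _ ↦ zero_le_one, hg, by simp⟩

lemma ripDefect_self_nonneg (hα : 0 ≤ α) (hRIPa : ∀ u ∈ simpleSet B k, α * ‖u‖ ≤ ‖Φ u‖)
    {u : H} (hu : u ∈ simpleSet B k) : 0 ≤ ripDefect Φ α u u := by
  have := pow_le_pow_left₀ (by positivity) (hRIPa u hu) 2
  rw [ripDefect_self]
  linarith [mul_pow α ‖u‖ 2]

lemma ripDefect_self_atom_le (hBunit : ∀ b ∈ B, ‖b‖ = 1) (hRIPb : ∀ b ∈ B, ‖Φ b‖ ≤ β)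
    {b : H} (hb : b ∈ B) : ripDefect Φ α b b ≤ β ^ 2 - α ^ 2 := by
  have := pow_le_pow_left₀ (norm_nonneg _) (hRIPb b hb) 2
  rw [ripDefect_self, hBunit b hb]
  linarith

lemma mul_norm_sq_le_of_map_eq_zero (hBunit : ∀ b ∈ B, ‖b‖ = 1) (hk : 0 < k) (hα : 0 ≤ α)
    (hRIPa : ∀ u ∈ simpleSet B k, α * ‖u‖ ≤ ‖Φ u‖) (hRIPb : ∀ b ∈ B, ‖Φ b‖ ≤ β)
    {S : Finset H} (hS : ↑S ⊆ B) {σ : H → ℝ} (hσ : ∀ b ∈ S, 0 ≤ σ b)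
    (hσ₁ : ∑ b ∈ S, σ b = 1) {v : H} (hv : ∑ b ∈ S, σ b • b = v) (hΦv : Φ v = 0) :
    (k - 1) * α ^ 2 * ‖v‖ ^ 2 ≤ β ^ 2 - α ^ 2 := by
  set F := ripDefect Φ α
  have hsum : 0 ≤ weightedTupleSum S σ k (fun u ↦ F (0 + u) (0 + u)) :=
    weightedTupleSum_nonneg hσ fun g hg ↦ by
      simpa using ripDefect_self_nonneg hα hRIPa (sum_mem_simpleSet fun i ↦ hS (hg i))
  rw [weightedTupleSum_bilinForm F ripDefect_isSymm hσ₁ hv] at hsum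
  have hD : ∑ b ∈ S, σ b * F b b ≤ β ^ 2 - α ^ 2 :=
    calc ∑ b ∈ S, σ b * F b b ≤ ∑ b ∈ S, σ b * (β ^ 2 - α ^ 2) :=
          sum_le_sum fun b hb ↦ mul_le_mul_of_nonneg_left
            (ripDefect_self_atom_le hBunit hRIPb (hS hb)) (hσ b hb)
      _ = β ^ 2 - α ^ 2 := by rw [← sum_mul, hσ₁, one_mul]
  have hQ : F v v = -(α ^ 2 * ‖v‖ ^ 2) := by simp [F, ripDefect_self, hΦv]
  have hk' : (0 : ℝ) < k := by exact_mod_cast hk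
  simp only [map_zero, LinearMap.zero_apply, hQ] at hsum
  nlinarith

lemma norm_le_mul_atomNorm_of_map_eq_zero (hBunit : ∀ b ∈ B, ‖b‖ = 1) (hBspan : Spans B)
    (hk : 1 < k) (hα : 0 < α) (hRIPa : ∀ u ∈ simpleSet B k, α * ‖u‖ ≤ ‖Φ u‖)
    (hRIPb : ∀ b ∈ B, ‖Φ b‖ ≤ β) {ρ : ℝ}
    (hρ : Real.sqrt ((β ^ 2 - α ^ 2) / (α ^ 2 * ((k : ℝ) - 1))) < ρ) {v : H} (hΦv : Φ v = 0) :
    ‖v‖ ≤ ρ * atomNorm B v := by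
  have hρ₀ : 0 < ρ := (Real.sqrt_nonneg _).trans_lt hρ
  suffices h : ∀ r ∈ atomCosts B v, ‖v‖ / ρ ≤ r by
    rw [← div_le_iff₀' hρ₀]
    exact le_csInf (atomCosts_nonempty hBspan v) h
  rintro r ⟨S, σ, hS, hσ, hv, rfl⟩
  rw [div_le_iff₀' hρ₀]
  rcases (sum_nonneg hσ).eq_or_lt with hr | hr
  · have hv0 : v = 0 := by
      rw [hv]
      exact sum_eq_zero fun b hb ↦ by
        rw [(sum_eq_zero_iff_of_nonneg hσ).1 hr.symm b hb, zero_smul]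
    simp [hv0, ← hr]
  set r := ∑ b ∈ S, σ b
  have hkey := mul_norm_sq_le_of_map_eq_zero hBunit (k := k) (by omega) hα.le hRIPa hRIPb hS
    (σ := fun b ↦ σ b / r) (v := r⁻¹ • v) (fun b hb ↦ div_nonneg (hσ b hb) hr.le)
    (by rw [← sum_div, div_self hr.ne']) (by simp [hv, smul_sum, div_eq_inv_mul, mul_smul])
    (by simp [hΦv])
  have hk₁ : (0 : ℝ) < k - 1 := by
    have : (1 : ℝ) < k := by exact_mod_cast hk
    linarith
  have hsq : ‖r⁻¹ • v‖ ^ 2 < ρ ^ 2 := by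
    rw [Real.sqrt_lt' hρ₀] at hρ
    refine lt_of_le_of_lt ?_ hρ
    rw [le_div_iff₀ (by positivity)]
    linarith
  have hlt := lt_of_pow_lt_pow_left₀ 2 hρ₀.le hsq
  rw [norm_smul, Real.norm_of_nonneg (inv_nonneg.2 hr.le), inv_mul_lt_iff₀ hr] at hlt
  linarith

end RIP

lemma IsCSSpace.atomNorm_le {H : Type*} [NormedAddCommGroup H] [InnerProductSpace ℝ H]
    {B A : Set H} {L : ℝ} (hBsym : ∀ b ∈ B, -b ∈ B) (hBspan : Spans B)
    (hCS : IsCSSpace B A L) {a v : H} (ha : a ∈ A) (hv : atomNorm B (a + v) ≤ atomNorm B a) :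
    atomNorm B v ≤ 2 * L * ‖v‖ := by
  obtain ⟨z₁, z₂, rfl, hz₁, hz₂⟩ := hCS.2 a ha v
  have h : atomNorm B (a + z₁) ≤ atomNorm B (a + (z₁ + z₂)) + atomNorm B z₂ := by
    calc atomNorm B (a + z₁) = atomNorm B (a + (z₁ + z₂) + -z₂) := by abel_nf
      _ ≤ atomNorm B (a + (z₁ + z₂)) + atomNorm B (-z₂) := atomNorm_add_le hBspan _ _
      _ ≤ atomNorm B (a + (z₁ + z₂)) + atomNorm B z₂ := by
        gcongr; exact atomNorm_neg_le hBsym hBspan z₂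
  linarith [atomNorm_add_le hBspan z₁ z₂]

theorem weakenRIP_exact_recovery_general
    {H : Type*} [NormedAddCommGroup H] [InnerProductSpace ℝ H]
    {m : ℕ} (B : Set H)
    (hBsym : ∀ b ∈ B, -b ∈ B) (hBspan : Spans B) (hBunit : ∀ b ∈ B, ‖b‖ = 1)
    (k : ℕ) (hk : 1 < k) (L : ℝ) (hL : 0 < L)
    (hCS : IsCSSpace B (simpleSet B k) L)
    (α β : ℝ) (hα : 0 < α)
    (Φ : H →ₗ[ℝ] EuclideanSpace ℝ (Fin m))
    (hRIPa : ∀ u ∈ simpleSet B k, α * ‖u‖ ≤ ‖Φ u‖)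
    (hRIPb : ∀ b ∈ B, ‖Φ b‖ ≤ β)
    (hρ : ∃ ρ : ℝ, Real.sqrt ((β ^ 2 - α ^ 2) / (α ^ 2 * ((k : ℝ) - 1))) < ρ ∧
      ρ < 1 / (4 * L)) :
    ∀ xnat ∈ simpleSet B k, ∀ xstar : H,
      Φ xstar = Φ xnat →
      (∀ x : H, Φ x = Φ xnat → atomNorm B xstar ≤ atomNorm B x) →
      xstar = xnat := by
  intro xnat hxnat xstar hΦ hmin
  obtain ⟨ρ, hρ, hρL⟩ := hρ
  set v := xstar - xnat
  have hnull : ‖v‖ ≤ ρ * atomNorm B v :=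
    norm_le_mul_atomNorm_of_map_eq_zero hBunit hBspan hk hα hRIPa hRIPb hρ (by simp [v, hΦ])
  have hcone : atomNorm B v ≤ 2 * L * ‖v‖ :=
    hCS.atomNorm_le hBsym hBspan hxnat (by simpa [v] using hmin xnat rfl)
  have hLρ : 4 * L * ρ < 1 := by rwa [lt_div_iff₀ (by positivity), mul_comm] at hρL
  have hv₀ : atomNorm B v = 0 := by
    have := mul_le_mul_of_nonneg_left hnull (by positivity : 0 ≤ 2 * L)
    nlinarith [atomNorm_nonneg (B := B) v]
  rw [← sub_eq_zero, ← norm_le_zero_iff]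
  simpa [hv₀] using hnull

/-- Weaken-RIP implies exact recovery of simple elements from noiseless measurements. -/
theorem weakenRIP_exact_recovery
    {H : Type*} [NormedAddCommGroup H] [InnerProductSpace ℝ H] [FiniteDimensional ℝ H]
    {m : ℕ} (B : Set H)
    (hBsym : ∀ b ∈ B, -b ∈ B) (hBspan : Spans B) (hBunit : ∀ b ∈ B, ‖b‖ = 1)
    (k : ℕ) (hk : 1 < k) (L : ℝ) (hL : 0 < L)
    (hCS : IsCSSpace B (simpleSet B k) L)
    (α β : ℝ) (hα : 0 < α) (hβ : 0 < β) (hαβ : α ≤ β)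
    (Φ : H →ₗ[ℝ] EuclideanSpace ℝ (Fin m))
    (hRIPa : ∀ u ∈ simpleSet B k, α * ‖u‖ ≤ ‖Φ u‖)
    (hRIPb : ∀ b ∈ B, ‖Φ b‖ ≤ β)
    (hρ : ∃ ρ : ℝ, Real.sqrt ((β ^ 2 - α ^ 2) / (α ^ 2 * ((k : ℝ) - 1))) < ρ ∧
      ρ < 1 / (4 * L)) :
    ∀ xnat ∈ simpleSet B k, ∀ xstar : H,
      Φ xstar = Φ xnat →
      (∀ x : H, Φ x = Φ xnat → atomNorm B xstar ≤ atomNorm B x) →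
      xstar = xnat :=
  weakenRIP_exact_recovery_general B hBsym hBspan hBunit k hk L hL hCS α β hα Φ hRIPa hRIPb hρ
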